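/- If there exist n−1 mutually orthogonal latin squares of order n, then there exists an affine plane of order n: a set of n² points and n(n+1) lines of size n each such that every pair of distinct points lies on exactly one line. -/
import Mathlib

/-- A latin square of order n as a function: every row and column is a bijection. -/
def IsLatinSquare {R C S : Type*} (L : R → C → S) : Prop :=
  (∀ i, Function.Bijective (L i)) ∧ ∀ j, Function.Bijective fun i => L i j

/-- Orthogonality: the superimposition map on cells is injective. -/
def OrthogonalLS {R C S T : Type*} (L : R → C → S) (M : R → C → T) : Prop :=
  Function.Injective fun p : R × C => (L p.1 p.2, M p.1 p.2)

/-- An affine plane of order n on the point type `P`: n² points, n(n+1) lines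
each of size n, any two distinct points on exactly one line. -/
def IsAffinePlane {P : Type*} [Fintype P] [DecidableEq P] (n : ℕ)
    (Lines : Finset (Finset P)) : Prop :=
  Fintype.card P = n ^ 2 ∧ Lines.card = n * (n + 1) ∧
    (∀ l ∈ Lines, l.card = n) ∧
    ∀ p q : P, p ≠ q → ∃! l, l ∈ Lines ∧ p ∈ l ∧ q ∈ l

section MOLS

variable {n : ℕ} (L : Fin (n - 1) → Fin n → Fin n → Fin n)

/-- Index type for lines of the affine plane. -/
abbrev MolsIdx (n : ℕ) := Fin n ⊕ Fin n ⊕ (Fin (n - 1) × Fin n)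

def molsLine : MolsIdx n → Finset (Fin n × Fin n)
  | .inl i => Finset.univ.filter (fun c => c.1 = i)
  | .inr (.inl j) => Finset.univ.filter (fun c => c.2 = j)
  | .inr (.inr (t, s)) => Finset.univ.filter (fun c => L t c.1 c.2 = s)

lemma molsLine_card (hlatin : ∀ t, IsLatinSquare (L t)) (a : MolsIdx n) :
    (molsLine L a).card = n := by
  rcases a with i | j | ⟨t, s⟩
  · have h : molsLine L (.inl i) = {i} ×ˢ Finset.univ := by
      ext ⟨c1, c2⟩; simp [molsLine, Finset.mem_product, eq_comm]
    simp [h]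
  · have h : molsLine L (.inr (.inl j)) = Finset.univ ×ˢ {j} := by
      ext ⟨c1, c2⟩; simp [molsLine, Finset.mem_product, eq_comm]
    simp [h]
  · set g : Fin n → Fin n := fun i => Function.surjInv ((hlatin t).1 i).2 s with hg
    have hgev : ∀ i, L t i (g i) = s := fun i => Function.surjInv_eq ((hlatin t).1 i).2 s
    have h : molsLine L (.inr (.inr (t, s)))
        = Finset.univ.map ⟨fun i => (i, g i), fun a b h => by simpa using congrArg Prod.fst h⟩ := by
      ext c
      simp only [molsLine, Finset.mem_filter, Finset.mem_univ, true_and, Finset.mem_map,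
        Function.Embedding.coeFn_mk]
      constructor
      · intro h
        refine ⟨c.1, ?_⟩
        have : c.2 = g c.1 := ((hlatin t).1 c.1).1 (by rw [h, hgev])
        exact Prod.ext rfl this.symm
      · rintro ⟨i, rfl⟩
        exact hgev i
    simp [h]

/-- Master lemma: two distinct points determine the line index. -/
lemma mols_master (hlatin : ∀ t, IsLatinSquare (L t))
    (horth : ∀ t t', t ≠ t' → OrthogonalLS (L t) (L t'))
    {p q : Fin n × Fin n} (hpq : p ≠ q) {a b : MolsIdx n}
    (hpa : p ∈ molsLine L a) (hqa : q ∈ molsLine L a)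
    (hpb : p ∈ molsLine L b) (hqb : q ∈ molsLine L b) : a = b := by
  obtain ⟨p1, p2⟩ := p; obtain ⟨q1, q2⟩ := q
  have hpq' : ¬(p1 = q1 ∧ p2 = q2) := by
    intro ⟨h1, h2⟩; exact hpq (by rw [h1, h2])
  rcases a with i | j | ⟨t, s⟩ <;> rcases b with i' | j' | ⟨t', s'⟩ <;>
    simp only [molsLine, Finset.mem_filter, Finset.mem_univ, true_and] at hpa hqa hpb hqb
  · rw [hpa] at hpb; rw [hpb]
  · exact absurd ⟨hpa.trans hqa.symm, hpb.trans hqb.symm⟩ hpq'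
  · -- row i and latin (t', s')
    exfalso
    have h1 : p1 = q1 := hpa.trans hqa.symm
    have h2 : p2 = q2 := ((hlatin t').1 p1).1 (by rw [hpb, h1, hqb])
    exact hpq' ⟨h1, h2⟩
  · exact absurd ⟨hpb.trans hqb.symm, hpa.trans hqa.symm⟩ hpq'
  · rw [hpa] at hpb; rw [hpb]
  · -- col j and latin (t', s')
    exfalso
    have h2 : p2 = q2 := hpa.trans hqa.symm
    have h1 : p1 = q1 := ((hlatin t').2 p2).1 (by simpa [h2] using hpb.trans hqb.symm)
    exact hpq' ⟨h1, h2⟩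
  · exfalso
    have h1 : p1 = q1 := hpb.trans hqb.symm
    have h2 : p2 = q2 := ((hlatin t).1 p1).1 (by rw [hpa, h1, hqa])
    exact hpq' ⟨h1, h2⟩
  · exfalso
    have h2 : p2 = q2 := hpb.trans hqb.symm
    have h1 : p1 = q1 := ((hlatin t).2 p2).1 (by simpa [h2] using hpa.trans hqa.symm)
    exact hpq' ⟨h1, h2⟩
  · -- latin vs latin
    by_cases htt : t = t'
    · subst htt
      rw [← hpa, ← hpb]
    · exfalso
      have := horth t t' htt (a₁ := (p1, p2)) (a₂ := (q1, q2)) (by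
        simp only
        rw [hpa, hqa, hpb, hqb])
      exact hpq this

lemma molsLine_injective (hn : 2 ≤ n) (hlatin : ∀ t, IsLatinSquare (L t))
    (horth : ∀ t t', t ≠ t' → OrthogonalLS (L t) (L t')) :
    Function.Injective (molsLine L) := by
  intro a b hab
  have hcard : 1 < (molsLine L a).card := by
    rw [molsLine_card L hlatin]; omega
  obtain ⟨p, hp, q, hq, hpq⟩ := Finset.one_lt_card.mp hcard
  exact mols_master L hlatin horth hpq hp hq (hab ▸ hp) (hab ▸ hq)

end MOLS

/-- If there exist n−1 mutually orthogonal latin squares of order n, then there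
exists an affine plane of order n. -/
theorem stmt4 (n : ℕ) (hn : 2 ≤ n)
    (L : Fin (n - 1) → Fin n → Fin n → Fin n)
    (hlatin : ∀ t, IsLatinSquare (L t))
    (horth : ∀ t t', t ≠ t' → OrthogonalLS (L t) (L t')) :
    ∃ (P : Type) (_ : Fintype P) (_ : DecidableEq P) (Lines : Finset (Finset P)),
      IsAffinePlane n Lines := by
  obtain ⟨m, hm⟩ : ∃ m, n = m + 1 := ⟨n - 1, by omega⟩
  have hinj := molsLine_injective L hn hlatin horth
  refine ⟨Fin n × Fin n, inferInstance, inferInstance,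
    Finset.univ.image (molsLine L), ?_, ?_, ?_, ?_⟩
  · simp [sq]
  · rw [Finset.card_image_of_injective _ hinj, Finset.card_univ]
    simp only [Fintype.card_sum, Fintype.card_prod, Fintype.card_fin]
    rw [hm]; simp only [Nat.add_sub_cancel]; ring
  · intro l hl
    obtain ⟨a, _, rfl⟩ := Finset.mem_image.mp hl
    exact molsLine_card L hlatin a
  · intro p q hpq
    -- the n+1 lines through p
    set ι : Unit ⊕ Unit ⊕ Fin (n - 1) → MolsIdx n := fun a =>
      match a with
      | .inl _ => .inl p.1
      | .inr (.inl _) => .inr (.inl p.2)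
      | .inr (.inr t) => .inr (.inr (t, L t p.1 p.2)) with hι
    have hpι : ∀ a, p ∈ molsLine L (ι a) := by
      rintro (_ | _ | t) <;> simp [hι, molsLine]
    have hιinj : Function.Injective ι := by
      rintro (⟨⟩ | ⟨⟩ | a) (⟨⟩ | ⟨⟩ | b) h <;> simp [hι] at h ⊢; try exact h.1
    set F : Unit ⊕ Unit ⊕ Fin (n - 1) → Finset (Fin n × Fin n) :=
      fun a => molsLine L (ι a) \ {p} with hF
    have hFcard : ∀ a, (F a).card = n - 1 := by
      intro a
      rw [hF]
      rw [Finset.card_sdiff_of_subset (by simpa using hpι a)]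
      simp [molsLine_card L hlatin]
    have hdisj : ∀ a ∈ (Finset.univ : Finset (Unit ⊕ Unit ⊕ Fin (n-1))), ∀ b ∈ Finset.univ,
        a ≠ b → Disjoint (F a) (F b) := by
      intro a _ b _ hab
      rw [Finset.disjoint_left]
      intro r hra hrb
      simp only [hF, Finset.mem_sdiff, Finset.mem_singleton] at hra hrb
      exact hab (hιinj (mols_master L hlatin horth hra.2 hra.1 (hpι a) hrb.1 (hpι b)))
    have hBcard : (Finset.univ.biUnion F).card = (m + 2) * m := by
      rw [Finset.card_biUnion hdisj]
      rw [Finset.sum_congr rfl (fun a _ => hFcard a), Finset.sum_const, Finset.card_univ]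
      simp only [Fintype.card_sum, Fintype.card_unit, Fintype.card_fin]
      rw [hm]; simp only [Nat.add_sub_cancel]; ring
    have hsub : Finset.univ.biUnion F ⊆ Finset.univ \ {p} := by
      intro r hr
      obtain ⟨a, _, hra⟩ := Finset.mem_biUnion.mp hr
      simp only [hF, Finset.mem_sdiff, Finset.mem_singleton] at hra ⊢
      exact ⟨Finset.mem_univ r, hra.2⟩
    have hUcard : ((Finset.univ : Finset (Fin n × Fin n)) \ {p}).card = (m + 2) * m := by
      rw [Finset.card_sdiff_of_subset (by simp), Finset.card_univ]
      simp only [Fintype.card_prod, Fintype.card_fin, Finset.card_singleton]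
      rw [hm]
      have h1 : (m + 1) * (m + 1) = m * m + 2 * m + 1 := by ring
      have h2 : (m + 2) * m = m * m + 2 * m := by ring
      omega
    have hBeq : Finset.univ.biUnion F = Finset.univ \ {p} :=
      Finset.eq_of_subset_of_card_le hsub (by rw [hBcard, hUcard])
    have hq : q ∈ Finset.univ.biUnion F := by
      rw [hBeq]; simp [Ne.symm hpq]
    obtain ⟨a, _, hqa⟩ := Finset.mem_biUnion.mp hq
    simp only [hF, Finset.mem_sdiff, Finset.mem_singleton] at hqa
    refine ⟨molsLine L (ι a), ⟨Finset.mem_image_of_mem _ (Finset.mem_univ _), hpι a, hqa.1⟩, ?_⟩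
    rintro l ⟨hl, hpl, hql⟩
    obtain ⟨b, _, rfl⟩ := Finset.mem_image.mp hl
    exact congrArg (molsLine L) (mols_master L hlatin horth hpq hpl hql (hpι a) hqa.1)
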